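/- Penalized-reward guarantee: Suppose the per-step model error satisfies E_{s'∼T̂(·|s,a)}[V^π_M(s')] − E_{s'∼T(·|s,a)}[V^π_M(s')] ≤ u(s,a) for an admissible error estimator u ≥ 0 and all (s,a). Then for the penalized MDP M̃ with reward r̃(s,a) = r(s,a) − γ·u(s,a) (and dynamics T̂), J(π, M) ≥ J(π, M̃) for every policy π. -/

import Mathlib

open scoped BigOperators

/-- A Markov decision process on finite state space `S` and action space `A`,
with reward `r`, transition kernel `T` (as a function giving next-state probabilities),
and discount factor `γ`. -/
structure MDP (S A : Type*) where
  r : S → A → ℝ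
  T : S → A → S → ℝ
  γ : ℝ

variable {S A : Type*} [Fintype S] [Fintype A] [DecidableEq S]

/-- `π` is a stationary stochastic policy: `π s` is a probability distribution over actions. -/
def IsPolicy (π : S → A → ℝ) : Prop :=
  (∀ s a, 0 ≤ π s a) ∧ ∀ s, ∑ a, π s a = 1

/-- `T` is a transition kernel: `T s a` is a probability distribution over next states. -/
def IsKernel (T : S → A → S → ℝ) : Prop :=
  (∀ s a s', 0 ≤ T s a s') ∧ ∀ s a, ∑ s', T s a s' = 1

/-- `μ` is a probability distribution on states. -/
def IsDist (μ : S → ℝ) : Prop :=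
  (∀ s, 0 ≤ μ s) ∧ ∑ s, μ s = 1

/-- `stateDist M π μ₀ t s` is the probability `P^π_{M,t}(s)` that the state at time `t`
equals `s` when executing policy `π` in MDP `M` from initial distribution `μ₀`. -/
noncomputable def stateDist (M : MDP S A) (π : S → A → ℝ) (μ₀ : S → ℝ) : ℕ → S → ℝ
  | 0 => μ₀
  | t + 1 => fun s' => ∑ s, ∑ a, stateDist M π μ₀ t s * π s a * M.T s a s'

/-- Expected reward at time `t` under policy `π` in MDP `M` started from `μ₀`. -/
noncomputable def expRewardAt (M : MDP S A) (π : S → A → ℝ) (μ₀ : S → ℝ) (t : ℕ) : ℝ :=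
  ∑ s, ∑ a, stateDist M π μ₀ t s * π s a * M.r s a

/-- Value function `V^π_M(s) = E[∑_t γ^t r(s_t,a_t) | s₀ = s]`. -/
noncomputable def Vval (M : MDP S A) (π : S → A → ℝ) (s : S) : ℝ :=
  ∑' t : ℕ, M.γ ^ t * expRewardAt M π (fun x => if x = s then (1 : ℝ) else 0) t

/-- Expected discounted return `J(π, M) = E_{s ∼ μ₀}[V^π_M(s)]`. -/
noncomputable def Jval (M : MDP S A) (π : S → A → ℝ) (μ₀ : S → ℝ) : ℝ :=
  ∑ s, μ₀ s * Vval M π s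

/-- Normalized discounted occupancy measure
`ρ^π_M(s,a) = (1-γ) ∑_t γ^t P^π_{M,t}(s) π(a|s)`. -/
noncomputable def occupancy (M : MDP S A) (π : S → A → ℝ) (μ₀ : S → ℝ) (s : S) (a : A) : ℝ :=
  (1 - M.γ) * (∑' t : ℕ, M.γ ^ t * stateDist M π μ₀ t s) * π s a

/-- Total variation distance between finite distributions: `sup_E |p(E) - q(E)|`. -/
noncomputable def tvFin {X : Type*} [Fintype X] (p q : X → ℝ) : ℝ :=
  ⨆ E : Finset X, |∑ x ∈ E, p x - ∑ x ∈ E, q x|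

/-!
The value `V = V^π_M` is the fixed point of the Bellman operator `r_π + γ P_π V` of `M`. The
model-error bound turns this into `V ≥ r̃_π + γ P̂_π V`: `V` is a supersolution of the Bellman
equation of the penalized MDP. Iterating, `V ≥ ∑_{t<N} γᵗ P̂_πᵗ r̃_π + γᴺ P̂_πᴺ V`, and the last
term vanishes because `P̂_π` is stochastic and `γ < 1`. Hence `V ≥ V^π_{M̃}` pointwise, and
averaging over `μ₀` gives the claim.
-/

open Finset Filter Topology Matrix

namespace Matrix

variable {n : Type*} [Fintype n] [DecidableEq n] {P : Matrix n n ℝ}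

lemma abs_mulVec_apply_le_of_mem_rowStochastic (hP : P ∈ rowStochastic ℝ n) {w : n → ℝ}
    {B : ℝ} (hw : ∀ j, |w j| ≤ B) (i : n) : |(P *ᵥ w) i| ≤ B :=
  calc |(P *ᵥ w) i| ≤ ∑ j, |P i j * w j| := abs_sum_le_sum_abs _ _
    _ ≤ ∑ j, P i j * B := by
        gcongr with j
        rw [abs_mul, abs_of_nonneg (nonneg_of_mem_rowStochastic hP)]
        exact mul_le_mul_of_nonneg_left (hw j) (nonneg_of_mem_rowStochastic hP)
    _ = B := by rw [← sum_mul, sum_row_of_mem_rowStochastic hP, one_mul]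

lemma mulVec_mono_of_mem_rowStochastic (hP : P ∈ rowStochastic ℝ n) {v w : n → ℝ}
    (h : v ≤ w) : P *ᵥ v ≤ P *ᵥ w := by
  intro i
  have := nonneg_mulVec_of_mem_rowStochastic hP (x := w - v) (fun j => sub_nonneg.2 (h j)) i
  rwa [mulVec_sub, Pi.sub_apply, sub_nonneg] at this

lemma norm_pow_mul_pow_mulVec_apply_le (hP : P ∈ rowStochastic ℝ n) {γ : ℝ} (hγ0 : 0 ≤ γ)
    (w : n → ℝ) (i : n) (t : ℕ) : ‖γ ^ t * (P ^ t *ᵥ w) i‖ ≤ γ ^ t * ‖w‖ := by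
  rw [norm_mul, norm_pow, Real.norm_of_nonneg hγ0]
  exact mul_le_mul_of_nonneg_left (abs_mulVec_apply_le_of_mem_rowStochastic (pow_mem hP t)
    (fun j => norm_le_pi_norm w j) i) (pow_nonneg hγ0 t)

lemma summable_pow_mul_pow_mulVec_apply (hP : P ∈ rowStochastic ℝ n) {γ : ℝ} (hγ0 : 0 ≤ γ)
    (hγ1 : γ < 1) (w : n → ℝ) (i : n) : Summable fun t => γ ^ t * (P ^ t *ᵥ w) i :=
  .of_norm_bounded ((summable_geometric_of_lt_one hγ0 hγ1).mul_right ‖w‖)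
    (norm_pow_mul_pow_mulVec_apply_le hP hγ0 w i)

lemma tendsto_pow_mul_pow_mulVec_apply (hP : P ∈ rowStochastic ℝ n) {γ : ℝ} (hγ0 : 0 ≤ γ)
    (hγ1 : γ < 1) (w : n → ℝ) (i : n) :
    Tendsto (fun t => γ ^ t * (P ^ t *ᵥ w) i) atTop (𝓝 0) := by
  refine squeeze_zero_norm (norm_pow_mul_pow_mulVec_apply_le hP hγ0 w i) ?_
  simpa only [zero_mul] using (tendsto_pow_atTop_nhds_zero_of_lt_one hγ0 hγ1).mul_const ‖w‖

noncomputable def discountedValue (P : Matrix n n ℝ) (γ : ℝ) (r : n → ℝ) : n → ℝ :=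
  fun i => ∑' t, γ ^ t * (P ^ t *ᵥ r) i

lemma discountedValue_eq_add_smul_mulVec (hP : P ∈ rowStochastic ℝ n) {γ : ℝ} (hγ0 : 0 ≤ γ)
    (hγ1 : γ < 1) (r : n → ℝ) :
    discountedValue P γ r = r + γ • P *ᵥ discountedValue P γ r := by
  funext i
  have hsum := summable_pow_mul_pow_mulVec_apply hP hγ0 hγ1 r
  have hshift : ∀ t, γ ^ (t + 1) * (P ^ (t + 1) *ᵥ r) i
      = γ * ∑ j, P i j * (γ ^ t * (P ^ t *ᵥ r) j) := by
    intro t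
    rw [pow_succ', pow_succ', ← mulVec_mulVec]
    change γ * γ ^ t * ∑ j, P i j * (P ^ t *ᵥ r) j = _
    rw [mul_sum, mul_sum]
    exact sum_congr rfl fun j _ => by ring
  change ∑' t, γ ^ t * (P ^ t *ᵥ r) i
    = r i + γ * ∑ j, P i j * ∑' t, γ ^ t * (P ^ t *ᵥ r) j
  rw [(hsum i).tsum_eq_zero_add, tsum_congr hshift, tsum_mul_left,
    Summable.tsum_finsetSum fun j _ => (hsum j).mul_left (P i j)]
  simp only [pow_zero, one_mulVec, one_mul, tsum_mul_left]

lemma discountedValue_le_of_add_smul_mulVec_le (hP : P ∈ rowStochastic ℝ n) {γ : ℝ}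
    (hγ0 : 0 ≤ γ) (hγ1 : γ < 1) {r w : n → ℝ} (h : r + γ • P *ᵥ w ≤ w) :
    discountedValue P γ r ≤ w := by
  have hiter : ∀ N, (∑ t ∈ range N, γ ^ t • P ^ t *ᵥ r) + γ ^ N • P ^ N *ᵥ w ≤ w := by
    intro N
    induction N with
    | zero => simp
    | succ N ih =>
      calc (∑ t ∈ range (N + 1), γ ^ t • P ^ t *ᵥ r) + γ ^ (N + 1) • P ^ (N + 1) *ᵥ w
          = (∑ t ∈ range N, γ ^ t • P ^ t *ᵥ r) + γ ^ N • P ^ N *ᵥ (r + γ • P *ᵥ w) := by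
            rw [sum_range_succ, mulVec_add, mulVec_smul, mulVec_mulVec, smul_add, smul_smul,
              pow_succ, pow_succ, add_assoc]
        _ ≤ (∑ t ∈ range N, γ ^ t • P ^ t *ᵥ r) + γ ^ N • P ^ N *ᵥ w := by
            gcongr
            exact mulVec_mono_of_mem_rowStochastic (pow_mem hP N) h
        _ ≤ w := ih
  intro i
  have hlim : Tendsto (fun N => (∑ t ∈ range N, γ ^ t * (P ^ t *ᵥ r) i)
      + γ ^ N * (P ^ N *ᵥ w) i) atTop (𝓝 (discountedValue P γ r i + 0)) :=
    ((summable_pow_mul_pow_mulVec_apply hP hγ0 hγ1 r i).hasSum.tendsto_sum_nat).add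
      (tendsto_pow_mul_pow_mulVec_apply hP hγ0 hγ1 w i)
  refine le_of_tendsto' (add_zero (discountedValue P γ r i) ▸ hlim) fun N => ?_
  simpa only [Pi.add_apply, Finset.sum_apply, Pi.smul_apply, smul_eq_mul] using hiter N i

end Matrix

namespace MDP

variable {S A : Type*} [Fintype S] [Fintype A]

def transitionMatrix (M : MDP S A) (π : S → A → ℝ) : Matrix S S ℝ :=
  fun s s' => ∑ a, π s a * M.T s a s'

def policyReward (M : MDP S A) (π : S → A → ℝ) : S → ℝ :=
  fun s => ∑ a, π s a * M.r s a

def bellmanOp (M : MDP S A) (π : S → A → ℝ) (v : S → ℝ) : S → ℝ :=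
  policyReward M π + M.γ • transitionMatrix M π *ᵥ v

variable {M : MDP S A} {π : S → A → ℝ}

lemma bellmanOp_apply (v : S → ℝ) (s : S) :
    bellmanOp M π v s = ∑ a, π s a * (M.r s a + M.γ * ∑ s', M.T s a s' * v s') := by
  simp only [bellmanOp, Pi.add_apply, Pi.smul_apply, smul_eq_mul, policyReward, mulVec,
    dotProduct, transitionMatrix, mul_add, sum_add_distrib, sum_mul, mul_sum]
  rw [sum_comm]
  exact congrArg _ (sum_congr rfl fun a _ => sum_congr rfl fun s' _ => by ring)

variable [DecidableEq S]

lemma transitionMatrix_mem_rowStochastic (hT : IsKernel M.T) (hπ : IsPolicy π) :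
    transitionMatrix M π ∈ rowStochastic ℝ S := by
  refine mem_rowStochastic_iff_sum.2
    ⟨fun s s' => sum_nonneg fun a _ => mul_nonneg (hπ.1 s a) (hT.1 s a s'), fun s => ?_⟩
  simp only [transitionMatrix]
  rw [sum_comm]
  simp only [← mul_sum, hT.2, mul_one, hπ.2]

lemma stateDist_eq_vecMul_pow (M : MDP S A) (π : S → A → ℝ) (μ : S → ℝ) (t : ℕ) :
    stateDist M π μ t = μ ᵥ* transitionMatrix M π ^ t := by
  induction t with
  | zero => rw [pow_zero, vecMul_one]; rfl
  | succ t ih =>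
    rw [pow_succ, ← vecMul_vecMul, ← ih]
    funext s'
    simp only [stateDist, vecMul, dotProduct, transitionMatrix, mul_sum, mul_assoc]

lemma expRewardAt_eq_vecMul_pow_dotProduct (M : MDP S A) (π : S → A → ℝ) (μ : S → ℝ) (t : ℕ) :
    expRewardAt M π μ t = μ ᵥ* transitionMatrix M π ^ t ⬝ᵥ policyReward M π := by
  rw [← stateDist_eq_vecMul_pow]
  simp only [expRewardAt, dotProduct, policyReward, mul_sum, mul_assoc]

lemma Vval_eq_discountedValue (M : MDP S A) (π : S → A → ℝ) :
    Vval M π = discountedValue (transitionMatrix M π) M.γ (policyReward M π) := by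
  funext s
  refine tsum_congr fun t => ?_
  rw [expRewardAt_eq_vecMul_pow_dotProduct, ← dotProduct_mulVec]
  simp [dotProduct]

lemma bellmanOp_Vval (hT : IsKernel M.T) (hπ : IsPolicy π) (hγ0 : 0 ≤ M.γ) (hγ1 : M.γ < 1) :
    bellmanOp M π (Vval M π) = Vval M π := by
  rw [bellmanOp, Vval_eq_discountedValue]
  exact (discountedValue_eq_add_smul_mulVec (transitionMatrix_mem_rowStochastic hT hπ)
    hγ0 hγ1 _).symm

lemma Vval_le_of_bellmanOp_le (hT : IsKernel M.T) (hπ : IsPolicy π) (hγ0 : 0 ≤ M.γ)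
    (hγ1 : M.γ < 1) {w : S → ℝ} (hw : bellmanOp M π w ≤ w) : Vval M π ≤ w := by
  rw [Vval_eq_discountedValue]
  exact discountedValue_le_of_add_smul_mulVec_le (transitionMatrix_mem_rowStochastic hT hπ)
    hγ0 hγ1 hw

end MDP

open MDP

theorem penalized_reward_guarantee_general (M Mhat : MDP S A) (u : S → A → ℝ) (μ₀ : S → ℝ)
    (hγ0 : 0 < M.γ) (hγ1 : M.γ < 1)
    (hT : IsKernel M.T) (hThat : IsKernel Mhat.T) (hμ : IsDist μ₀) :
    ∀ π : S → A → ℝ, IsPolicy π →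
      (∀ s a, (∑ s', Mhat.T s a s' * Vval M π s') - (∑ s', M.T s a s' * Vval M π s')
        ≤ u s a) →
      Jval M π μ₀ ≥
        Jval ⟨fun s a => M.r s a - M.γ * u s a, Mhat.T, M.γ⟩ π μ₀ := by
  intro π hπ hmodel
  set Mpen : MDP S A := ⟨fun s a => M.r s a - M.γ * u s a, Mhat.T, M.γ⟩
  have hsuper : bellmanOp Mpen π (Vval M π) ≤ Vval M π := by
    intro s
    rw [← congrFun (bellmanOp_Vval hT hπ hγ0.le hγ1) s, bellmanOp_apply, bellmanOp_apply]
    refine sum_le_sum fun a _ => mul_le_mul_of_nonneg_left ?_ (hπ.1 s a)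
    have := mul_le_mul_of_nonneg_left (hmodel s a) hγ0.le
    change M.r s a - M.γ * u s a + M.γ * ∑ s', Mhat.T s a s' * Vval M π s' ≤ _
    linarith
  have hV : Vval Mpen π ≤ Vval M π :=
    Vval_le_of_bellmanOp_le (M := Mpen) hThat hπ hγ0.le hγ1 hsuper
  exact sum_le_sum fun s _ => mul_le_mul_of_nonneg_left (hV s) (hμ.1 s)

/-- Penalized-reward guarantee: if the per-step model error satisfies
`E_{s' ∼ T̂(·|s,a)}[V^π_M(s')] - E_{s' ∼ T(·|s,a)}[V^π_M(s')] ≤ u(s,a)` for an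
admissible error estimator `u ≥ 0`, then for the penalized MDP `M̃` with reward
`r̃ = r - γ u` and dynamics `T̂`, we have `J(π,M) ≥ J(π,M̃)` for every such policy `π`. -/
theorem penalized_reward_guarantee (M Mhat : MDP S A) (u : S → A → ℝ) (μ₀ : S → ℝ)
    (hr : M.r = Mhat.r) (hγ : M.γ = Mhat.γ) (hγ0 : 0 < M.γ) (hγ1 : M.γ < 1)
    (hT : IsKernel M.T) (hThat : IsKernel Mhat.T) (hμ : IsDist μ₀)
    (hu0 : ∀ s a, 0 ≤ u s a) :
    ∀ π : S → A → ℝ, IsPolicy π →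
      (∀ s a, (∑ s', Mhat.T s a s' * Vval M π s') - (∑ s', M.T s a s' * Vval M π s')
        ≤ u s a) →
      Jval M π μ₀ ≥
        Jval ⟨fun s a => M.r s a - M.γ * u s a, Mhat.T, M.γ⟩ π μ₀ :=
  penalized_reward_guarantee_general M Mhat u μ₀ hγ0 hγ1 hT hThat hμ
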